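/- arXiv:2008.11592 — 4 statements merged into one kernel-verified Lean document; each statement's English description precedes it below -/
import Mathlib

section
/- Let X ∈ ℝ^{n×n} be stable (spectral radius less than 1) and let Y₁, Y₂ be symmetric n×n real matrices. If XᵀY₁X − Y₁ ≤ XᵀY₂X − Y₂ in the Loewner order, then Y₁ ≥ Y₂ in the Loewner order. -/
/-!
Put `Z = Y₁ - Y₂`; the hypothesis says `Z - XᵀZX` is positive semidefinite. Conjugating by `X`
and adding the hypothesis again shows inductively that `Z - (Xᵀ)ᵏ Z Xᵏ` is positive semidefinite
for every `k`. By Gelfand's formula, spectral radius `< 1` forces `Xᵏ → 0`, so these matrices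
tend to `Z`, and the positive semidefinite cone is closed.
-/

/-- A real square matrix is stable if all of its complex eigenvalues have
absolute value strictly less than 1 (spectral radius < 1). -/
def Matrix.IsStable {n : ℕ} (X : Matrix (Fin n) (Fin n) ℝ) : Prop :=
  ∀ μ ∈ spectrum ℂ (X.map ((↑) : ℝ → ℂ)), ‖μ‖ < 1

open Filter Topology

theorem tendsto_pow_atTop_nhds_zero_of_spectralRadius_lt_one {A : Type*} [NormedRing A]
    [NormedAlgebra ℂ A] [CompleteSpace A] {a : A} (ha : spectralRadius ℂ a < 1) :
    Tendsto (a ^ ·) atTop (𝓝 0) := by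
  obtain ⟨r, hρr, hr1⟩ := ENNReal.lt_iff_exists_nnreal_btwn.mp ha
  have hgelfand := spectrum.pow_nnnorm_pow_one_div_tendsto_nhds_spectralRadius a
  have hbound : ∀ᶠ k : ℕ in atTop, ‖a ^ k‖ ≤ (r : ℝ) ^ k := by
    filter_upwards [hgelfand.eventually_lt_const hρr, eventually_ne_atTop 0] with k hk hk0
    rw [one_div, ENNReal.rpow_inv_lt_iff (by positivity), ENNReal.rpow_natCast,
      ← ENNReal.coe_pow, ENNReal.coe_lt_coe] at hk
    exact_mod_cast hk.le
  exact squeeze_zero_norm' hbound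
    (tendsto_pow_atTop_nhds_zero_of_lt_one r.coe_nonneg (by exact_mod_cast hr1))

section StableMatrix

-- The ℓ∞-operator norm only serves to make complex matrices a Banach algebra; its topology is
-- the product topology, so the limits below are the usual entrywise ones.
attribute [local instance] Matrix.linftyOpNormedRing Matrix.linftyOpNormedAlgebra

variable {n : ℕ} {X : Matrix (Fin n) (Fin n) ℝ}

theorem Matrix.IsStable.spectralRadius_lt_one (hX : X.IsStable) :
    spectralRadius ℂ (X.map ((↑) : ℝ → ℂ)) < 1 := by
  rcases subsingleton_or_nontrivial (Matrix (Fin n) (Fin n) ℂ) with _ | _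
  · simp [spectralRadius, spectrum.of_subsingleton]
  · refine (spectrum.spectralRadius_lt_of_forall_lt _ fun μ hμ => ?_).trans_eq ENNReal.coe_one
    exact_mod_cast hX μ hμ

theorem Matrix.IsStable.tendsto_pow (hX : X.IsStable) : Tendsto (X ^ ·) atTop (𝓝 0) := by
  have hpow (k : ℕ) : X ^ k = ((X.map ((↑) : ℝ → ℂ)) ^ k).map Complex.re := by
    change X ^ k = (Complex.ofRealHom.mapMatrix X ^ k).map Complex.re
    rw [← map_pow, RingHom.mapMatrix_apply, Matrix.map_map]
    exact (Matrix.map_id _).symm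
  have hre : Continuous fun M : Matrix (Fin n) (Fin n) ℂ => M.map Complex.re :=
    continuous_id.matrix_map Complex.continuous_re
  simpa [Function.comp_def, ← hpow] using (hre.tendsto 0).comp
    (tendsto_pow_atTop_nhds_zero_of_spectralRadius_lt_one hX.spectralRadius_lt_one)

end StableMatrix

namespace Matrix

variable {n R : Type*} [Fintype n] [CommRing R] [PartialOrder R] [StarRing R]

theorem isClosed_setOf_posSemidef [TopologicalSpace R] [IsTopologicalRing R] [ContinuousStar R]
    [OrderClosedTopology R] : IsClosed {A : Matrix n n R | A.PosSemidef} := by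
  simp_rw [posSemidef_iff_dotProduct_mulVec, Set.ofPred_and, Set.ofPred_forall]
  refine .inter (isClosed_eq continuous_id.matrix_conjTranspose continuous_id)
    (isClosed_iInter fun x => isClosed_le continuous_const ?_)
  exact continuous_const.dotProduct (continuous_id.matrix_mulVec continuous_const)

variable [DecidableEq n] [StarOrderedRing R]

theorem PosSemidef.sub_conjTranspose_pow_mul_mul_pow {X Z : Matrix n n R}
    (h : (Z - Xᴴ * Z * X).PosSemidef) (k : ℕ) : (Z - Xᴴ ^ k * Z * X ^ k).PosSemidef := by
  induction k with
  | zero => simpa using PosSemidef.zero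
  | succ k ih =>
    convert h.add (ih.conjTranspose_mul_mul_same X) using 1
    rw [pow_succ X, pow_succ' Xᴴ]
    noncomm_ring

theorem PosSemidef.of_sub_conjTranspose_mul_mul_same [TopologicalSpace R] [IsTopologicalRing R]
    [ContinuousStar R] [OrderClosedTopology R] {X Z : Matrix n n R}
    (hX : Tendsto (X ^ ·) atTop (𝓝 0)) (h : (Z - Xᴴ * Z * X).PosSemidef) : Z.PosSemidef := by
  have hc : Continuous fun M : Matrix n n R => Z - Mᴴ * Z * M :=
    continuous_const.sub
      ((continuous_id.matrix_conjTranspose.matrix_mul continuous_const).matrix_mul continuous_id)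
  have hlim : Tendsto (fun k => Z - Xᴴ ^ k * Z * X ^ k) atTop (𝓝 Z) := by
    simpa [Function.comp_def, conjTranspose_pow] using (hc.tendsto 0).comp hX
  exact isClosed_setOf_posSemidef.mem_of_tendsto hlim
    (Eventually.of_forall h.sub_conjTranspose_pow_mul_mul_pow)

end Matrix

theorem lyapunov_monotone_general {n : ℕ} (X Y₁ Y₂ : Matrix (Fin n) (Fin n) ℝ)
    (hX : X.IsStable)
    (h : ((X.transpose * Y₂ * X - Y₂) - (X.transpose * Y₁ * X - Y₁)).PosSemidef) :
    (Y₁ - Y₂).PosSemidef := by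
  have hZ : Y₁ - Y₂ - X.conjTranspose * (Y₁ - Y₂) * X =
      X.transpose * Y₂ * X - Y₂ - (X.transpose * Y₁ * X - Y₁) := by
    rw [Matrix.conjTranspose_eq_transpose_of_trivial]
    noncomm_ring
  exact Matrix.PosSemidef.of_sub_conjTranspose_mul_mul_same hX.tendsto_pow (hZ ▸ h)

/-- Monotonicity of the discrete Lyapunov operator: if `X` is stable and
`XᵀY₁X − Y₁ ≤ XᵀY₂X − Y₂` in the Loewner order, then `Y₁ ≥ Y₂`. -/
theorem lyapunov_monotone {n : ℕ} (X Y₁ Y₂ : Matrix (Fin n) (Fin n) ℝ)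
    (hX : X.IsStable) (hY₁ : Y₁.IsSymm) (hY₂ : Y₂.IsSymm)
    (h : ((X.transpose * Y₂ * X - Y₂) - (X.transpose * Y₁ * X - Y₁)).PosSemidef) :
    (Y₁ - Y₂).PosSemidef :=
  lyapunov_monotone_general X Y₁ Y₂ hX h
end

section
/- Let 𝒵 be a compact set of stable n×n real matrices (each with spectral radius less than 1). Then there exist constants a₀ > 0 and 0 < b₀ < 1 such that ‖Z^k‖₂ ≤ a₀ b₀^k for all k ∈ ℕ and all Z ∈ 𝒵. -/
/-- The operator 2-norm of a real matrix (induced by the Euclidean norm). -/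
noncomputable def op2 {m n : ℕ} (M : Matrix (Fin m) (Fin n) ℝ) : ℝ :=
  ‖LinearMap.toContinuousLinearMap (Matrix.toEuclideanLin M)‖

open Filter Topology

section

-- Gelfand's formula needs a Banach-algebra norm on complex matrices; any one will do, since the
-- statement is about the (product) topology only.
attribute [local instance] Matrix.linftyOpNormedRing Matrix.linftyOpNormedAlgebra

theorem Matrix.IsStable.tendsto_pow_atTop_nhds_zero {n : ℕ} {Z : Matrix (Fin n) (Fin n) ℝ}
    (hZ : Z.IsStable) : Tendsto (Z ^ ·) atTop (𝓝 0) := by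
  -- the spectral radius bound below needs a nontrivial algebra
  cases isEmpty_or_nonempty (Fin n)
  · simp only [Subsingleton.elim _ (0 : Matrix (Fin n) (Fin n) ℝ)]
    exact tendsto_const_nhds
  have hρ : spectralRadius ℂ (Z.map ((↑) : ℝ → ℂ)) < 1 := by
    simpa using spectrum.spectralRadius_lt_of_forall_lt _ (r := 1) fun z hz => by
      simpa [← NNReal.coe_lt_coe] using hZ z hz
  have hre : Continuous fun W : Matrix (Fin n) (Fin n) ℂ => W.map Complex.re :=
    continuous_id.matrix_map Complex.continuous_re
  have hpow (m : ℕ) : ((Z.map ((↑) : ℝ → ℂ)) ^ m).map Complex.re = Z ^ m := by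
    rw [show Z.map ((↑) : ℝ → ℂ) = Complex.ofRealHom.mapMatrix Z from rfl, ← map_pow]
    ext
    simp
  simpa [hpow, Function.comp_def] using
    (hre.tendsto 0).comp (tendsto_pow_atTop_nhds_zero_of_spectralRadius_lt_one hρ)

end

section
variable {R : Type*} [SeminormedRing R]

theorem norm_pow_le_mul_rpow_of_norm_pow_le {x : R} {N : ℕ} {ρ B : ℝ} (hN : 0 < N)
    (hρ0 : 0 < ρ) (hρ1 : ρ ≤ 1) (hxN : ‖x ^ N‖ ≤ ρ) (hB : ∀ r < N, ‖x ^ r‖ ≤ B) (k : ℕ) :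
    ‖x ^ k‖ ≤ B / ρ * (ρ ^ (1 / N : ℝ)) ^ k := by
  have hB0 : 0 ≤ B := (norm_nonneg _).trans (hB 0 hN)
  have hqr : ∀ q, ‖x ^ (k % N + N * q)‖ ≤ B * ρ ^ q := by
    intro q
    induction q with
    | zero => simpa using hB _ (Nat.mod_lt k hN)
    | succ q ih =>
      calc ‖x ^ (k % N + N * (q + 1))‖ = ‖x ^ (k % N + N * q) * x ^ N‖ := by
            rw [← pow_add, mul_add_one, add_assoc]
        _ ≤ ‖x ^ (k % N + N * q)‖ * ‖x ^ N‖ := norm_mul_le _ _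
        _ ≤ B * ρ ^ q * ρ := by gcongr
        _ = B * ρ ^ (q + 1) := by ring
  have hkN : (k : ℝ) / N - 1 ≤ (k / N : ℕ) := by
    rw [sub_le_iff_le_add, div_le_iff₀' (by positivity)]
    exact_mod_cast (Nat.lt_mul_div_succ k hN).le
  calc ‖x ^ k‖ = ‖x ^ (k % N + N * (k / N))‖ := by rw [Nat.mod_add_div]
    _ ≤ B * ρ ^ (k / N) := hqr _
    _ ≤ B * ρ ^ ((k : ℝ) / N - 1) := by
        rw [← Real.rpow_natCast]
        exact mul_le_mul_of_nonneg_left (Real.rpow_le_rpow_of_exponent_ge hρ0 hρ1 hkN) hB0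
    _ = B / ρ * (ρ ^ (1 / N : ℝ)) ^ k := by
        rw [Real.rpow_sub hρ0, Real.rpow_one, ← Real.rpow_natCast, ← Real.rpow_mul hρ0.le]
        ring_nf

theorem IsCompact.exists_pos_forall_norm_pow_lt {K : Set R} (hK : IsCompact K)
    (hpow : ∀ x ∈ K, Tendsto (x ^ ·) atTop (𝓝 0)) {ε : ℝ} (hε0 : 0 < ε) (hε1 : ε ≤ 1) :
    ∃ N, 0 < N ∧ ∀ x ∈ K, ‖x ^ N‖ < ε := by
  let U (m : ℕ) : Set R := {y | ‖y ^ (m + 1)‖ < ε}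
  have hU : ∀ m, IsOpen (U m) := fun m =>
    isOpen_lt (continuous_pow (m + 1)).norm continuous_const
  have hcover : K ⊆ ⋃ m, U m := fun x hx => Set.mem_iUnion.mpr <|
    (((tendsto_add_atTop_iff_nat 1).mpr (hpow x hx)).norm.eventually_lt_const
      (by simpa using hε0)).exists
  obtain ⟨t, ht⟩ := hK.elim_finite_subcover U hU hcover
  -- a common multiple of the exponents of the finite subcover
  refine ⟨∏ m ∈ t, (m + 1), Finset.prod_pos fun m _ => Nat.succ_pos m, fun x hx => ?_⟩
  obtain ⟨m, hmt, hm⟩ := Set.mem_iUnion₂.mp (ht hx)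
  obtain ⟨e, he⟩ := Finset.dvd_prod_of_mem (fun m => m + 1) hmt
  have he0 : e ≠ 0 := by
    rintro rfl
    exact (Finset.prod_pos fun m _ => Nat.succ_pos m).ne' (by simpa using he)
  calc ‖x ^ ∏ m ∈ t, (m + 1)‖ = ‖(x ^ (m + 1)) ^ e‖ := by rw [he, pow_mul]
    _ ≤ ‖x ^ (m + 1)‖ ^ e := norm_pow_le' _ (Nat.pos_of_ne_zero he0)
    _ ≤ ‖x ^ (m + 1)‖ := pow_le_of_le_one (norm_nonneg _) (hm.le.trans hε1) he0
    _ < ε := hm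

theorem IsCompact.exists_norm_pow_le_mul_pow {K : Set R} (hK : IsCompact K)
    (hpow : ∀ x ∈ K, Tendsto (x ^ ·) atTop (𝓝 0)) :
    ∃ a b : ℝ, 0 < a ∧ 0 < b ∧ b < 1 ∧ ∀ x ∈ K, ∀ k : ℕ, ‖x ^ k‖ ≤ a * b ^ k := by
  obtain ⟨N, hN, hxN⟩ := hK.exists_pos_forall_norm_pow_lt hpow (ε := 1 / 2) (by norm_num)
    (by norm_num)
  obtain ⟨B, hB0, hB⟩ := ((Set.finite_lt_nat N).isCompact_biUnion fun r _ =>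
    hK.image (continuous_pow r)).isBounded.exists_pos_norm_le
  refine ⟨B / (1 / 2), (1 / 2) ^ (1 / N : ℝ), by positivity, by positivity,
    Real.rpow_lt_one (by norm_num) (by norm_num) (by positivity), fun x hx k => ?_⟩
  exact norm_pow_le_mul_rpow_of_norm_pow_le hN (by norm_num) (by norm_num) (hxN x hx).le
    (fun r hr => hB _ (Set.mem_biUnion hr (Set.mem_image_of_mem _ hx))) k

end

theorem op2_eq_norm_toEuclideanCLM {n : ℕ} (M : Matrix (Fin n) (Fin n) ℝ) :
    op2 M = ‖Matrix.toEuclideanCLM (𝕜 := ℝ) M‖ := rfl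

theorem Matrix.continuous_toEuclideanCLM {𝕜 ι : Type*} [RCLike 𝕜] [Fintype ι] [DecidableEq ι] :
    Continuous (Matrix.toEuclideanCLM (𝕜 := 𝕜) (n := ι)) :=
  (Matrix.toEuclideanCLM (𝕜 := 𝕜) (n := ι)).toAlgEquiv.toLinearMap.continuous_of_finiteDimensional

/-- A compact set of stable matrices admits uniform exponential decay constants. -/
theorem uniform_exponential_stability_on_compact {n : ℕ}
    (𝒵 : Set (Matrix (Fin n) (Fin n) ℝ)) (hc : IsCompact 𝒵)
    (hstab : ∀ Z ∈ 𝒵, Z.IsStable) :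
    ∃ a₀ b₀ : ℝ, 0 < a₀ ∧ 0 < b₀ ∧ b₀ < 1 ∧
      ∀ Z ∈ 𝒵, ∀ k : ℕ, op2 (Z ^ k) ≤ a₀ * b₀ ^ k := by
  have hcont := Matrix.continuous_toEuclideanCLM (𝕜 := ℝ) (ι := Fin n)
  obtain ⟨a, b, ha, hb0, hb1, hbound⟩ := (hc.image hcont).exists_norm_pow_le_mul_pow <| by
    rintro _ ⟨Z, hZ, rfl⟩
    simpa [Function.comp_def, map_pow] using
      (hcont.tendsto 0).comp (hstab Z hZ).tendsto_pow_atTop_nhds_zero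
  refine ⟨a, b, ha, hb0, hb1, fun Z hZ k => ?_⟩
  simpa [op2_eq_norm_toEuclideanCLM, map_pow] using hbound _ (Set.mem_image_of_mem _ hZ) k
end

section
/- Let A, B, S, R, K be as in the LQR setting with A − BK stable, P the unique symmetric solution of (A−BK)ᵀP(A−BK) − P + S + KᵀRK = 0, and let P* be a symmetric matrix satisfying the algebraic Riccati equation AᵀP*A − P* − AᵀP*B(R + BᵀP*B)⁻¹BᵀP*A + S = 0 with R + BᵀP*B invertible. Define K* = (R + BᵀP*B)⁻¹BᵀP*A. Then (A−BK)ᵀP*(A−BK) − P* = −S − KᵀRK + (K − K*)ᵀ(R + BᵀP*B)(K − K*). -/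
namespace Matrix

variable {m n l : Type*} {α : Type*} [CommRing α]

theorem IsSymm.transpose_mul_mul [Fintype n] {P : Matrix n n α} (hP : P.IsSymm)
    (B : Matrix n m α) :
    (Bᵀ * P * B).IsSymm := by
  simp only [IsSymm, transpose_mul, transpose_transpose, hP.eq, Matrix.mul_assoc]

theorem completion_of_squares [Fintype m] [DecidableEq m] {M : Matrix m m α} (hM : M.IsSymm)
    (hdet : IsUnit M.det) (K N : Matrix m l α) :
    (K - M⁻¹ * N)ᵀ * M * (K - M⁻¹ * N) = Kᵀ * M * K - Kᵀ * N - Nᵀ * K + Nᵀ * M⁻¹ * N := by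
  have hinv : (M⁻¹)ᵀ = M⁻¹ := by rw [transpose_nonsing_inv, hM.eq]
  simp only [transpose_sub, transpose_mul, hinv, Matrix.sub_mul, Matrix.mul_sub, Matrix.mul_assoc,
    mul_nonsing_inv_cancel_left _ _ hdet, nonsing_inv_mul_cancel_left _ _ hdet]
  abel

theorem transpose_sub_mul_mul_sub_mul [Fintype m] [Fintype n] {P : Matrix n n α}
    (hP : P.IsSymm) (A : Matrix n l α) (B : Matrix n m α) (K : Matrix m l α) (R : Matrix m m α) :
    (A - B * K)ᵀ * P * (A - B * K) + Kᵀ * R * K =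
      Aᵀ * P * A - Kᵀ * (Bᵀ * P * A) - (Bᵀ * P * A)ᵀ * K + Kᵀ * (R + Bᵀ * P * B) * K := by
  simp only [transpose_sub, transpose_mul, transpose_transpose, hP.eq, Matrix.sub_mul, Matrix.mul_sub,
    Matrix.add_mul, Matrix.mul_add, Matrix.mul_assoc]
  abel

end Matrix

theorem are_completion_of_squares_general {n m : ℕ}
    (A : Matrix (Fin n) (Fin n) ℝ) (B : Matrix (Fin n) (Fin m) ℝ)
    (S : Matrix (Fin n) (Fin n) ℝ) (R : Matrix (Fin m) (Fin m) ℝ)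
    (K : Matrix (Fin m) (Fin n) ℝ) (Pstar : Matrix (Fin n) (Fin n) ℝ)
    (hR : R.PosDef)
    (hPs : Pstar.IsSymm)
    (hRinv : IsUnit (R + B.transpose * Pstar * B).det)
    (hARE : A.transpose * Pstar * A - Pstar -
        A.transpose * Pstar * B * (R + B.transpose * Pstar * B)⁻¹ * B.transpose * Pstar * A
        + S = 0)
    (Kstar : Matrix (Fin m) (Fin n) ℝ)
    (hKstar : Kstar = (R + B.transpose * Pstar * B)⁻¹ * B.transpose * Pstar * A) :
    (A - B * K).transpose * Pstar * (A - B * K) - Pstar =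
      -S - K.transpose * R * K +
        (K - Kstar).transpose * (R + B.transpose * Pstar * B) * (K - Kstar) := by
  set M := R + B.transpose * Pstar * B
  set N := B.transpose * Pstar * A
  have hM : M.IsSymm :=
    (Matrix.isHermitian_iff_isSymm.mp hR.isHermitian).add (hPs.transpose_mul_mul B)
  have hKstar_eq : Kstar = M⁻¹ * N := by simp only [hKstar, N, Matrix.mul_assoc]
  have hNt : N.transpose = A.transpose * Pstar * B := by
    simp only [N, Matrix.transpose_mul, Matrix.transpose_transpose, hPs.eq, Matrix.mul_assoc]
  rw [hKstar_eq, Matrix.completion_of_squares hM hRinv,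
    eq_sub_of_add_eq (Matrix.transpose_sub_mul_mul_sub_mul hPs A B K R), hNt]
  linear_combination (norm := skip) hARE
  simp only [M, N, Matrix.mul_assoc]
  abel

/-- Completion-of-squares reformulation of the ARE: for any gain `K` with
Lyapunov solution `P` and any ARE solution `P*` with `K* = (R+BᵀP*B)⁻¹BᵀP*A`,
`(A−BK)ᵀP*(A−BK) − P* = −S − KᵀRK + (K−K*)ᵀ(R+BᵀP*B)(K−K*)`. -/
theorem are_completion_of_squares {n m : ℕ}
    (A : Matrix (Fin n) (Fin n) ℝ) (B : Matrix (Fin n) (Fin m) ℝ)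
    (S : Matrix (Fin n) (Fin n) ℝ) (R : Matrix (Fin m) (Fin m) ℝ)
    (K : Matrix (Fin m) (Fin n) ℝ) (P Pstar : Matrix (Fin n) (Fin n) ℝ)
    (hS : S.IsSymm) (hR : R.PosDef)
    (hstab : (A - B * K).IsStable) (hP : P.IsSymm)
    (hLyap : (A - B * K).transpose * P * (A - B * K) - P + S + K.transpose * R * K = 0)
    (hPs : Pstar.IsSymm)
    (hRinv : IsUnit (R + B.transpose * Pstar * B).det)
    (hARE : A.transpose * Pstar * A - Pstar -
        A.transpose * Pstar * B * (R + B.transpose * Pstar * B)⁻¹ * B.transpose * Pstar * A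
        + S = 0)
    (Kstar : Matrix (Fin m) (Fin n) ℝ)
    (hKstar : Kstar = (R + B.transpose * Pstar * B)⁻¹ * B.transpose * Pstar * A) :
    (A - B * K).transpose * Pstar * (A - B * K) - Pstar =
      -S - K.transpose * R * K +
        (K - Kstar).transpose * (R + B.transpose * Pstar * B) * (K - Kstar) :=
  are_completion_of_squares_general A B S R K Pstar hR hPs hRinv hARE Kstar hKstar
end

section
/- If S is symmetric positive definite and K₂, P₁ are as in the exact policy improvement lemma (so that (A−BK₂)ᵀP₁(A−BK₂) − P₁ ≤ −(S + K₂ᵀRK₂) < 0) with P₁ symmetric positive definite, then A − BK₂ is stable (spectral radius less than 1). -/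
/-!
A Lyapunov argument. The Loewner inequality makes `Q = P₁ - LᵀP₁L` positive definite, where
`L = A - BK₂`. If `Lv = μv` with `v ≠ 0` complex, then `v*Qv = (1 - |μ|²) v*P₁v`, and both
quadratic forms are positive, so `|μ| < 1`. Complex quadratic forms of a real symmetric matrix
split as `v*Mv = aᵀMa + bᵀMb` for `v = a + ib`, so real positive definite matrices stay positive
definite over `ℂ`.
-/

open Complex Matrix

namespace Matrix

variable {n : Type*} [Fintype n]

theorem exists_mulVec_eq_smul_of_mem_spectrum {K : Type*} [Field K] [DecidableEq n]
    {L : Matrix n n K} {μ : K} (hμ : μ ∈ spectrum K L) :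
    ∃ v ≠ 0, L *ᵥ v = μ • v := by
  rw [← spectrum_toLin', ← Module.End.hasEigenvalue_iff_mem_spectrum] at hμ
  obtain ⟨v, hv⟩ := hμ.exists_hasEigenvector
  exact ⟨v, hv.2, by simpa using hv.apply_eq_smul⟩

open scoped ComplexOrder in
theorem norm_lt_one_of_mem_spectrum_of_posDef {𝕜 : Type*} [RCLike 𝕜] [DecidableEq n]
    {L P : Matrix n n 𝕜} (hP : P.PosDef) (hQ : (P - Lᴴ * P * L).PosDef) {μ : 𝕜}
    (hμ : μ ∈ spectrum 𝕜 L) : ‖μ‖ < 1 := by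
  obtain ⟨v, hv, hLv⟩ := exists_mulVec_eq_smul_of_mem_spectrum hμ
  have hform : star v ⬝ᵥ (P - Lᴴ * P * L) *ᵥ v
      = (1 - (‖μ‖ ^ 2 : ℝ)) * (star v ⬝ᵥ P *ᵥ v) := by
    have hLPL : star v ⬝ᵥ (Lᴴ * P * L) *ᵥ v = star (L *ᵥ v) ⬝ᵥ P *ᵥ (L *ᵥ v) := by
      rw [← mulVec_mulVec, ← mulVec_mulVec, dotProduct_mulVec (star v) Lᴴ, ← star_mulVec]
    rw [sub_mulVec, dotProduct_sub, hLPL, hLv, star_smul, mulVec_smul, smul_dotProduct,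
      dotProduct_smul, RCLike.star_def, RCLike.ofReal_pow, ← RCLike.mul_conj, smul_eq_mul,
      smul_eq_mul]
    ring
  have hpos := hQ.dotProduct_mulVec_pos hv
  rw [hform] at hpos
  have hgap : (0 : 𝕜) < 1 - (‖μ‖ ^ 2 : ℝ) :=
    pos_of_mul_pos_left hpos (hP.dotProduct_mulVec_pos hv).le
  rw [← RCLike.ofReal_one, ← RCLike.ofReal_sub, RCLike.ofReal_pos, sub_pos] at hgap
  exact (sq_lt_one_iff₀ (norm_nonneg μ)).mp hgap

theorem ofReal_comp_dotProduct_map_ofReal_mulVec (M : Matrix n n ℝ) (a b : n → ℝ) :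
    (ofReal ∘ a) ⬝ᵥ M.map ofReal *ᵥ (ofReal ∘ b) = ((a ⬝ᵥ M *ᵥ b : ℝ) : ℂ) := by
  rw [show (M.map ofReal *ᵥ (ofReal ∘ b)) = ofRealHom ∘ (M *ᵥ b) from
    funext fun i => (ofRealHom.map_mulVec M b i).symm]
  exact (ofRealHom.map_dotProduct a (M *ᵥ b)).symm

theorem star_dotProduct_map_ofReal_mulVec {M : Matrix n n ℝ} (hM : M.IsSymm) (x : n → ℂ) :
    star x ⬝ᵥ M.map ofReal *ᵥ x =
      (((re ∘ x) ⬝ᵥ M *ᵥ (re ∘ x) + (im ∘ x) ⬝ᵥ M *ᵥ (im ∘ x) : ℝ) : ℂ) := by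
  set a := re ∘ x
  set b := im ∘ x
  have hx : x = ofReal ∘ a + I • (ofReal ∘ b) :=
    funext fun i => Complex.ext (by simp [a, b]) (by simp [a, b])
  have hstar : star x = ofReal ∘ a - I • (ofReal ∘ b) :=
    funext fun i => Complex.ext (by simp [a, b]) (by simp [a, b])
  have hsymm : a ⬝ᵥ M *ᵥ b = b ⬝ᵥ M *ᵥ a := by
    rw [dotProduct_mulVec, ← mulVec_transpose, hM.eq, dotProduct_comm]
  clear_value a b
  rw [hstar, hx]
  simp only [mulVec_add, mulVec_smul, sub_dotProduct, dotProduct_add, smul_dotProduct,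
    dotProduct_smul, ofReal_comp_dotProduct_map_ofReal_mulVec, hsymm, smul_eq_mul, ofReal_add]
  linear_combination (-(b ⬝ᵥ M *ᵥ b : ℝ) : ℂ) * I_sq

open scoped ComplexOrder in
theorem PosDef.map_ofReal {M : Matrix n n ℝ} (hM : M.PosDef) : (M.map ofReal).PosDef := by
  refine .of_dotProduct_mulVec_pos (hM.isHermitian.map _ fun _ => by simp) fun x hx => ?_
  have hreim : re ∘ x ≠ 0 ∨ im ∘ x ≠ 0 := by
    contrapose! hx
    exact funext fun i => Complex.ext (congrFun hx.1 i) (congrFun hx.2 i)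
  rw [star_dotProduct_map_ofReal_mulVec (isHermitian_iff_isSymm.mp hM.isHermitian), zero_lt_real]
  have hpos {y : n → ℝ} (hy : y ≠ 0) : 0 < y ⬝ᵥ M *ᵥ y := by
    simpa using hM.dotProduct_mulVec_pos hy
  have hnonneg (y : n → ℝ) : 0 ≤ y ⬝ᵥ M *ᵥ y := by
    simpa using hM.posSemidef.dotProduct_mulVec_nonneg y
  rcases hreim with h | h
  · exact add_pos_of_pos_of_nonneg (hpos h) (hnonneg _)
  · exact add_pos_of_nonneg_of_pos (hnonneg _) (hpos h)

end Matrix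

/-- If `S` and `P₁` are symmetric positive definite and
`(A−BK₂)ᵀP₁(A−BK₂) − P₁ ≤ −(S + K₂ᵀRK₂)` in the Loewner order, then the
improved policy `K₂` is stabilizing: `ρ(A − BK₂) < 1`. -/
theorem improved_policy_stabilizing {n m : ℕ}
    (A : Matrix (Fin n) (Fin n) ℝ) (B : Matrix (Fin n) (Fin m) ℝ)
    (S : Matrix (Fin n) (Fin n) ℝ) (R : Matrix (Fin m) (Fin m) ℝ)
    (K₂ : Matrix (Fin m) (Fin n) ℝ) (P₁ : Matrix (Fin n) (Fin n) ℝ)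
    (hS : S.PosDef) (hR : R.PosDef) (hP₁ : P₁.PosDef)
    (hLoewner : (-(S + K₂.transpose * R * K₂) -
        ((A - B * K₂).transpose * P₁ * (A - B * K₂) - P₁)).PosSemidef) :
    (A - B * K₂).IsStable := by
  set L := A - B * K₂
  have hcost : (S + K₂ᵀ * R * K₂).PosDef :=
    hS.add_posSemidef (by simpa using hR.posSemidef.conjTranspose_mul_mul_same K₂)
  have hQ : (P₁ - Lᵀ * P₁ * L).PosDef := by
    convert hcost.add_posSemidef hLoewner using 1
    abel
  have hmap : (P₁ - Lᵀ * P₁ * L).map ofReal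
      = P₁.map ofReal - (L.map ofReal)ᴴ * P₁.map ofReal * L.map ofReal := by
    ext i j
    simp [mul_apply, Finset.sum_mul]
  intro μ hμ
  exact norm_lt_one_of_mem_spectrum_of_posDef hP₁.map_ofReal (hmap ▸ hQ.map_ofReal) hμ
end
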